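/- For every ε > 0 there exists k_0 = k_0(ε) such that for all integers k ≥ k_0, all real r with 0 < r ≤ 2^{k-1}·ln 2 − (ln 2)/2 − 1/2 − ε, and all α ∈ (0.9, 1]: g_r(α) < g_r(1/2). -/

import Mathlib

/-- The pair-correlation function `f(α) = 1 - 2^(1-k) (2 - α^k - (1-α)^k)`. -/
noncomputable def fPair (k : ℕ) (α : ℝ) : ℝ :=
  1 - (2 : ℝ) ^ (1 - (k : ℤ)) * (2 - α ^ k - (1 - α) ^ k)

/-- The entropy-correlation function
`g_r(α) = f(α)^r / (α^α (1-α)^(1-α))` (with `0^0 = 1`, as for `Real.rpow`). -/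
noncomputable def gNAE (k : ℕ) (r : ℝ) (α : ℝ) : ℝ :=
  fPair k α ^ r / (α ^ α * (1 - α) ^ (1 - α))

/-!
Write `x = 2^(1-k)`, `β = 1 - α` and `s = α^k + β^k`, and compare logarithms. At `α = 1/2`
one has `f = (1 - x)^2`, while Bernoulli's inequality gives `f(α) ≤ (1 - x)^(2 - s)`, so
`log g_r(α) ≤ 2r log (1 - x) + s · r (-log (1 - x)) + H(β)`, where `H` is the binary entropy
(the denominator of `g_r(α)` is `exp (-H(α))`) and `H(α) = H(β)`. The bound on `r`, together with
`-log (1 - x) ≤ x + x^2/2 + 2x^3`, gives `r (-log (1 - x)) ≤ log 2 - x/2 - δ` with `δ = 4k^4 x^2`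
once `k` is large, and it remains to show `H(β) < (1 - s) log 2 + s (x/2 + δ)`.

This is checked separately for `β ≤ kx`, for `kx < β ≤ k⁻²`, for `k⁻² < β` with `kβ < log k`,
and for `log k ≤ kβ`. Only the first range is delicate: there `β (1 - log β) ≤ kβ log 2 + x/2` is
sharp, and the slack `δ` has to absorb the second-order terms of `1 - s`.
-/

open Real Filter Topology

lemma one_sub_pow_le_one_sub_mul_add_sq {β : ℝ} (h0 : 0 ≤ β) (h1 : β ≤ 1) (k : ℕ) :
    (1 - β) ^ k ≤ 1 - k * β + (k * β) ^ 2 / 2 := by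
  induction k with
  | zero => norm_num
  | succ n ih =>
    have h := mul_le_mul_of_nonneg_right ih (sub_nonneg.2 h1)
    rw [pow_succ]
    push_cast
    nlinarith [mul_nonneg (mul_nonneg (sq_nonneg (n * β)) h0) h0]

lemma one_sub_pow_add_pow_le_exp_neg_add_sq {β : ℝ} (h0 : 0 ≤ β) (h1 : β ≤ 1) {k : ℕ}
    (hk : 2 ≤ k) : (1 - β) ^ k + β ^ k ≤ exp (-(k * β)) + β ^ 2 := by
  have h : (1 - β) ^ k ≤ exp (-β) ^ k :=
    pow_le_pow_left₀ (sub_nonneg.2 h1) (one_sub_le_exp_neg β) k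
  rw [← exp_nat_mul, mul_neg] at h
  linarith [pow_le_pow_of_le_one h0 h1 hk]

lemma neg_log_one_sub_le {x : ℝ} (hx0 : 0 ≤ x) (hx : x ≤ 1 / 2) :
    -log (1 - x) ≤ x + x ^ 2 / 2 + 2 * x ^ 3 := by
  have h := abs_log_sub_add_sum_range_le (x := x) (by rw [abs_of_nonneg hx0]; linarith) 2
  rw [abs_of_nonneg hx0, Finset.sum_range_succ, Finset.sum_range_one] at h
  have hrem : x ^ 3 / (1 - x) ≤ 2 * x ^ 3 := by
    rw [div_le_iff₀ (by linarith)]; nlinarith [pow_nonneg hx0 3]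
  norm_num at h
  linarith [(abs_le.1 h).1]

lemma negMulLog_le_exp_neg_one {x : ℝ} (hx : 0 ≤ x) : negMulLog x ≤ exp (-1) := by
  rcases hx.eq_or_lt with rfl | hx
  · simpa using (exp_pos _).le
  have h := log_le_sub_one_of_pos (div_pos (exp_pos (-1)) hx)
  rw [log_div (exp_pos _).ne' hx.ne', log_exp, le_sub_iff_add_le, le_div_iff₀ hx] at h
  rw [negMulLog]
  linarith

lemma self_add_negMulLog_le {c β : ℝ} (hc : 0 < c) (hβ : 0 ≤ β) :
    β + negMulLog β ≤ c - β * log c := by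
  rcases hβ.eq_or_lt with rfl | hβ
  · simpa using hc.le
  have h := log_le_sub_one_of_pos (div_pos hc hβ)
  rw [log_div hc.ne' hβ.ne', le_sub_iff_add_le, le_div_iff₀ hβ] at h
  rw [negMulLog]
  linarith

lemma binEntropy_le_self_add_negMulLog {p : ℝ} (h1 : p ≤ 1) :
    binEntropy p ≤ p + negMulLog p := by
  rw [binEntropy_eq_negMulLog_add_negMulLog_one_sub, add_comm p]
  linarith [negMulLog_le_one_sub_self (sub_nonneg.2 h1)]

lemma rpow_self_eq_exp_neg_negMulLog {x : ℝ} (hx : 0 ≤ x) : x ^ x = exp (-negMulLog x) := by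
  rcases hx.eq_or_lt with rfl | hx
  · simp
  rw [rpow_def_of_pos hx, negMulLog, neg_mul, neg_neg, mul_comm]

lemma two_zpow_one_sub_le_one {k : ℕ} (hk : 1 ≤ k) : (2 : ℝ) ^ (1 - (k : ℤ)) ≤ 1 :=
  zpow_le_one_of_nonpos₀ one_le_two (by omega)

lemma pow_add_one_sub_pow_le_one {k : ℕ} {α : ℝ} (hk : 1 ≤ k) (h0 : 0 ≤ α) (h1 : α ≤ 1) :
    α ^ k + (1 - α) ^ k ≤ 1 := by
  have := pow_le_of_le_one h0 h1 (by omega : k ≠ 0)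
  have := pow_le_of_le_one (sub_nonneg.2 h1) (by linarith) (by omega : k ≠ 0)
  linarith

lemma fPair_half (k : ℕ) : fPair k (1 / 2) = (1 - 2 ^ (1 - (k : ℤ))) ^ 2 := by
  have h : ((1 : ℝ) / 2) ^ k = 2 ^ (1 - (k : ℤ)) / 2 := by
    rw [zpow_sub₀ two_ne_zero, zpow_one, zpow_natCast, one_div_pow]; field_simp
  rw [fPair, show (1 : ℝ) - 1 / 2 = 1 / 2 by norm_num, h]
  ring

lemma fPair_pos {k : ℕ} {α : ℝ} (hk : 2 ≤ k) (h0 : 0 ≤ α) (h1 : α ≤ 1) : 0 < fPair k α := by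
  have hx : (2 : ℝ) ^ (1 - (k : ℤ)) ≤ 2 ^ (-1 : ℤ) := zpow_le_zpow_right₀ one_le_two (by omega)
  have hs : 0 < α ^ k + (1 - α) ^ k := by
    rcases h0.eq_or_lt with rfl | h0
    · simp only [sub_zero, one_pow]; positivity
    · positivity
  rw [fPair]
  norm_num at hx
  nlinarith [zpow_pos (two_pos : (0 : ℝ) < 2) (1 - (k : ℤ))]

lemma fPair_le_rpow {k : ℕ} {α : ℝ} (hk : 1 ≤ k) (h0 : 0 ≤ α) (h1 : α ≤ 1) :
    fPair k α ≤ (1 - 2 ^ (1 - (k : ℤ))) ^ (2 - (α ^ k + (1 - α) ^ k)) := by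
  have h := one_add_mul_self_le_rpow_one_add (neg_le_neg (two_zpow_one_sub_le_one hk))
    (by linarith [pow_add_one_sub_pow_le_one hk h0 h1] : 1 ≤ 2 - (α ^ k + (1 - α) ^ k))
  rw [fPair]
  convert h using 1 <;> ring_nf

lemma gNAE_eq_exp {k : ℕ} {r α : ℝ} (hf : 0 < fPair k α) (h0 : 0 ≤ α) (h1 : α ≤ 1) :
    gNAE k r α = exp (r * log (fPair k α) + binEntropy α) := by
  rw [gNAE, rpow_def_of_pos hf, rpow_self_eq_exp_neg_negMulLog h0,
    rpow_self_eq_exp_neg_negMulLog (sub_nonneg.2 h1), ← exp_add, ← exp_sub,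
    binEntropy_eq_negMulLog_add_negMulLog_one_sub]
  ring_nf

lemma gNAE_half_eq_exp {k : ℕ} (hk : 2 ≤ k) (r : ℝ) :
    gNAE k r (1 / 2) = exp (2 * r * log (1 - 2 ^ (1 - (k : ℤ))) + log 2) := by
  rw [gNAE_eq_exp (fPair_pos hk (by norm_num) (by norm_num)) (by norm_num) (by norm_num),
    fPair_half, log_pow, one_div, binEntropy_two_inv, Nat.cast_ofNat, mul_left_comm, mul_assoc]

lemma two_pow_sub_one_eq_inv {k : ℕ} (hk : 1 ≤ k) :
    (2 : ℝ) ^ (k - 1) = ((2 : ℝ) ^ (1 - (k : ℤ)))⁻¹ := by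
  rw [← zpow_neg, neg_sub, ← zpow_natCast, Nat.cast_sub hk, Nat.cast_one]

lemma mul_neg_log_one_sub_le {x r ε δ : ℝ} (hx0 : 0 < x) (hx : x ≤ 1 / 2) (hε : 0 ≤ ε)
    (hδ : δ + 2 * log 2 * x ^ 2 ≤ ε * x) (hr : 0 ≤ r)
    (hrle : r ≤ log 2 / x - log 2 / 2 - 1 / 2 - ε) :
    r * -log (1 - x) ≤ log 2 - x / 2 - δ := by
  have hA : 0 ≤ -log (1 - x) := neg_nonneg.2 (log_nonpos (by linarith) (by linarith))
  have hR := hr.trans hrle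
  have hexp : (log 2 / x - log 2 / 2 - 1 / 2 - ε) * (x + x ^ 2 / 2 + 2 * x ^ 3) =
      log 2 - (1 / 2 + ε) * x + 2 * log 2 * x ^ 2 -
        (log 2 / 2 + 1 / 2 + ε) * (x ^ 2 / 2 + 2 * x ^ 3) := by
    field_simp; ring
  have hrest : 0 ≤ (log 2 / 2 + 1 / 2 + ε) * (x ^ 2 / 2 + 2 * x ^ 3) := by
    have := log_pos one_lt_two
    positivity
  calc r * -log (1 - x)
      ≤ (log 2 / x - log 2 / 2 - 1 / 2 - ε) * (x + x ^ 2 / 2 + 2 * x ^ 3) :=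
        mul_le_mul hrle (neg_log_one_sub_le hx0.le hx) hA hR
    _ ≤ log 2 - x / 2 - δ := by linarith

lemma binEntropy_lt_of_le_mul {k : ℕ} {x δ β : ℝ} (hk : 2 ≤ k)
    (hx : x = 2 ^ (1 - (k : ℤ))) (hδ : 4 * k ^ 4 * x ^ 2 ≤ δ) (hδx : δ ≤ x)
    (hβ0 : 0 ≤ β) (hβ1 : β ≤ 1) (hβ : β ≤ k * x) :
    binEntropy β <
      (1 - ((1 - β) ^ k + β ^ k)) * log 2 + ((1 - β) ^ k + β ^ k) * (x / 2 + δ) := by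
  have hx0 : 0 < x := hx ▸ zpow_pos two_pos _
  have hk1 : (1 : ℝ) ≤ k := by exact_mod_cast one_le_two.trans hk
  have hl2 : log 2 < 1 := by linarith [log_two_lt_d9]
  have hlog : log (x / 2) = -(k * log 2) := by
    rw [hx, log_div (zpow_pos two_pos _).ne' two_ne_zero, log_zpow]; push_cast; ring
  have hH : binEntropy β ≤ k * β * log 2 + x / 2 := by
    have := self_add_negMulLog_le (half_pos hx0) hβ0
    rw [hlog] at this
    linarith [binEntropy_le_self_add_negMulLog hβ1]
  have hs_lo : 1 - k * β ≤ (1 - β) ^ k + β ^ k := by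
    have := one_add_mul_le_pow (by linarith : (-2 : ℝ) ≤ -β) k
    rw [← sub_eq_add_neg, mul_neg, ← sub_eq_add_neg] at this
    linarith [pow_nonneg hβ0 k]
  have hs_hi := one_sub_pow_le_one_sub_mul_add_sq hβ0 hβ1 k
  have hkβ : k * β ≤ k ^ 2 * x := by nlinarith
  have hk2x : (k : ℝ) ^ 2 * x ^ 2 ≤ k ^ 4 * x ^ 2 :=
    mul_le_mul_of_nonneg_right (pow_le_pow_right₀ hk1 (by norm_num)) (sq_nonneg x)
  have hsq : (k * β) ^ 2 ≤ δ / 4 := by nlinarith [pow_le_pow_left₀ (by positivity) hkβ 2]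
  have hpow : β ^ k ≤ δ / 4 := by
    have : β ^ 2 ≤ (k * x) ^ 2 := pow_le_pow_left₀ hβ0 hβ 2
    nlinarith [pow_le_pow_of_le_one hβ0 hβ1 hk]
  have hδ0 : 0 < δ := lt_of_lt_of_le (by positivity) hδ
  have hlin : k * β * (x / 2 + δ) ≤ 3 / 8 * δ := by
    have : k * β * (x / 2 + δ) ≤ k ^ 2 * x * (3 / 2 * x) := by
      gcongr
      linarith
    nlinarith
  have hpos : 0 ≤ (k * β) ^ 2 / 2 + β ^ k := by positivity
  nlinarith [mul_le_mul_of_nonneg_right hs_lo (by positivity : 0 ≤ x / 2 + δ),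
    mul_le_mul_of_nonneg_left hl2.le hpos, log_pos one_lt_two]

lemma binEntropy_lt_of_mul_lt_of_le_inv_sq {k : ℕ} {x β : ℝ} (hk : 1 ≤ k) (hL : 2 ≤ log k)
    (hx : x = 2 ^ (1 - (k : ℤ))) (hβ : k * x < β) (hβk : β ≤ ((k : ℝ) ^ 2)⁻¹) :
    binEntropy β < (1 - ((1 - β) ^ k + β ^ k)) * log 2 := by
  have hx0 : 0 < x := hx ▸ zpow_pos two_pos _
  have hk1 : (1 : ℝ) ≤ k := by exact_mod_cast hk
  have hβ0 : 0 < β := by nlinarith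
  have hk2β : (k : ℝ) ^ 2 * β ≤ 1 := by
    rwa [le_inv_comm₀ hβ0 (by positivity), ← one_div, le_div_iff₀ hβ0] at hβk
  have hβ1 : β ≤ 1 := hβk.trans (inv_le_one_of_one_le₀ (one_le_pow₀ hk1))
  have hlogβ : log k + (1 - k) * log 2 < log β := by
    have := log_lt_log (by positivity) hβ
    rwa [log_mul (by positivity) hx0.ne', hx, log_zpow, Int.cast_sub, Int.cast_one,
      Int.cast_natCast] at this
  have hH : binEntropy β ≤ β - β * log β := by
    have := binEntropy_le_self_add_negMulLog hβ1
    rwa [negMulLog, neg_mul, ← sub_eq_add_neg] at this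
  have hs_hi := one_sub_pow_le_one_sub_mul_add_sq hβ0.le hβ1 k
  have hsq : (k * β) ^ 2 ≤ β := by nlinarith
  have hpow : β ^ k ≤ β := pow_le_of_le_one hβ0.le hβ1 (by omega)
  have hl2 : log 2 < 1 := by linarith [log_two_lt_d9]
  nlinarith [mul_lt_mul_of_pos_left hlogβ hβ0, log_pos one_lt_two,
    mul_le_mul_of_nonneg_right (by linarith : k * β - β / 2 - β ≤ 1 - ((1 - β) ^ k + β ^ k))
      (log_pos one_lt_two).le]

lemma binEntropy_lt_of_inv_sq_lt_of_mul_lt_log {k : ℕ} {β : ℝ} (hk : 2 ≤ k)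
    (hkL : 2 * (log k + 1) ^ 2 ≤ k * log 2) (hβk : ((k : ℝ) ^ 2)⁻¹ < β) (hβ1 : β ≤ 1 / 10)
    (hkβ : k * β < log k) :
    binEntropy β < (1 - ((1 - β) ^ k + β ^ k)) * log 2 := by
  have hk0 : (0 : ℝ) < k := by exact_mod_cast two_pos.trans_le hk
  have hβ0 : 0 < β := lt_trans (by positivity) hβk
  have hkβ0 : 0 < k * β := by positivity
  have hL : 0 < log k + 1 := by linarith
  have hlogβ : -(2 * log k) < log β := by
    have := log_lt_log (by positivity) hβk
    rwa [log_inv, log_pow, Nat.cast_ofNat] at this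
  have hH : binEntropy β < β + 2 * β * log k := by
    have := binEntropy_le_self_add_negMulLog (hβ1.trans (by norm_num))
    rw [negMulLog] at this
    nlinarith [mul_lt_mul_of_pos_left hlogβ hβ0]
  have hs := one_sub_pow_add_pow_le_exp_neg_add_sq hβ0.le (hβ1.trans (by norm_num)) hk
  set e := exp (-(k * β))
  have he : e * (1 + k * β) ≤ 1 := by
    have := add_one_le_exp (k * β)
    calc e * (1 + k * β) ≤ e * exp (k * β) := by gcongr; linarith
      _ = 1 := by rw [← exp_add, neg_add_cancel, exp_zero]
  have he1 : e ≤ 1 := exp_le_one_iff.2 (by linarith)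
  have hgain : k * β ≤ (1 - e) * (log k + 1) := by nlinarith
  have hl2 : 0 < log 2 := log_pos one_lt_two
  suffices h : (β + 2 * β * log k) * (log k + 1) ≤ ((1 - e - β ^ 2) * log 2) * (log k + 1) by
    have := le_of_mul_le_mul_right h hL
    nlinarith
  have hsmall : β ^ 2 * (log k + 1) * log 2 ≤ β * (log k + 1) := by
    have : β * log 2 ≤ 1 := by nlinarith [log_two_lt_d9]
    nlinarith [mul_le_mul_of_nonneg_left this (mul_nonneg hβ0.le hL.le)]
  nlinarith [mul_le_mul_of_nonneg_right hgain hl2.le, mul_le_mul_of_nonneg_left hkL hβ0.le]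

lemma binEntropy_lt_of_log_le_mul {k : ℕ} {β : ℝ} (hk : 4 ≤ k) (hβ0 : 0 ≤ β)
    (hβ1 : β ≤ 1 / 10) (hkβ : log k ≤ k * β) :
    binEntropy β < (1 - ((1 - β) ^ k + β ^ k)) * log 2 := by
  have hk0 : (4 : ℝ) ≤ k := by exact_mod_cast hk
  have hH : binEntropy β ≤ β + exp (-1) := by
    linarith [binEntropy_le_self_add_negMulLog (hβ1.trans (by norm_num)),
      negMulLog_le_exp_neg_one hβ0]
  have he : exp (-(k * β)) ≤ 1 / 4 := by
    calc exp (-(k * β)) ≤ exp (-log k) := exp_le_exp.2 (neg_le_neg hkβ)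
      _ = (k : ℝ)⁻¹ := by rw [exp_neg, exp_log (by positivity)]
      _ ≤ 1 / 4 := by rw [inv_eq_one_div]; gcongr
  have hs := one_sub_pow_add_pow_le_exp_neg_add_sq hβ0 (hβ1.trans (by norm_num)) (by omega : 2 ≤ k)
  have hβ2 : β ^ 2 ≤ 1 / 100 := by nlinarith
  nlinarith [exp_neg_one_lt_d9, log_two_gt_d9]

lemma binEntropy_lt_of_le_one_tenth {k : ℕ} {x δ β : ℝ} (hk : 4 ≤ k) (hL : 2 ≤ log k)
    (hkL : 2 * (log k + 1) ^ 2 ≤ k * log 2) (hx : x = 2 ^ (1 - (k : ℤ)))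
    (hδ : 4 * k ^ 4 * x ^ 2 ≤ δ) (hδx : δ ≤ x) (hβ0 : 0 ≤ β) (hβ1 : β ≤ 1 / 10) :
    binEntropy β <
      (1 - ((1 - β) ^ k + β ^ k)) * log 2 + ((1 - β) ^ k + β ^ k) * (x / 2 + δ) := by
  rcases le_or_gt β (k * x) with hβx | hβx
  · exact binEntropy_lt_of_le_mul (by omega) hx hδ hδx hβ0 (hβ1.trans (by norm_num)) hβx
  suffices h : binEntropy β < (1 - ((1 - β) ^ k + β ^ k)) * log 2 by
    have hx0 : 0 < x := hx ▸ zpow_pos two_pos _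
    have : 0 ≤ ((1 - β) ^ k + β ^ k) * (x / 2 + δ) := by
      have : 0 ≤ 1 - β := by linarith
      have : 0 ≤ δ := le_trans (by positivity) hδ
      positivity
    linarith
  rcases le_or_gt β ((k : ℝ) ^ 2)⁻¹ with hβk | hβk
  · exact binEntropy_lt_of_mul_lt_of_le_inv_sq (by omega) hL hx hβx hβk
  rcases lt_or_ge (k * β) (log k) with hkβ | hkβ
  · exact binEntropy_lt_of_inv_sq_lt_of_mul_lt_log (by omega) hkL hβk hβ1 hkβ
  · exact binEntropy_lt_of_log_le_mul hk hβ0 hβ1 hkβ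

lemma eventually_two_mul_log_add_one_sq_le :
    ∀ᶠ k : ℕ in atTop, 2 * (log k + 1) ^ 2 ≤ k * log 2 := by
  have hl2 : 0 < log 2 := log_pos one_lt_two
  have h := (tendsto_pow_log_div_mul_add_atTop (log 2 / 8) 0 2 (by positivity)).comp
    tendsto_natCast_atTop_atTop
  filter_upwards [h.eventually (gt_mem_nhds one_pos), eventually_gt_atTop 0,
    (tendsto_log_atTop.comp tendsto_natCast_atTop_atTop).eventually_ge_atTop 1] with k hk hk0 hL
  simp only [Function.comp_apply, add_zero] at hk hL
  rw [div_lt_one (by positivity)] at hk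
  nlinarith

lemma eventually_pow_mul_two_zpow_one_sub_le (n : ℕ) {c : ℝ} (hc : 0 < c) :
    ∀ᶠ k : ℕ in atTop, (k : ℝ) ^ n * 2 ^ (1 - (k : ℤ)) ≤ c := by
  have h := (tendsto_pow_const_div_const_pow_of_one_lt n one_lt_two).const_mul 2
  rw [mul_zero] at h
  filter_upwards [h.eventually (ge_mem_nhds hc)] with k hk
  refine (le_of_eq ?_).trans hk
  rw [zpow_sub₀ two_ne_zero, zpow_one, zpow_natCast]
  ring

/-- **Lemma 6 (Achlioptas–Moore).** For every `ε > 0` there is `k₀` such that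
for all `k ≥ k₀`, all `0 < r ≤ 2^(k-1) ln 2 - (ln 2)/2 - 1/2 - ε`, and all
`α ∈ (0.9, 1]`: `g_r(α) < g_r(1/2)`. -/
theorem gNAE_far_from_half :
    ∀ ε : ℝ, 0 < ε → ∃ k₀ : ℕ, ∀ k : ℕ, k₀ ≤ k → ∀ r : ℝ, 0 < r →
      r ≤ 2 ^ (k - 1) * Real.log 2 - Real.log 2 / 2 - 1 / 2 - ε →
      ∀ α ∈ Set.Ioc (0.9 : ℝ) 1, gNAE k r α < gNAE k r (1 / 2) := by
  intro ε hε
  obtain ⟨k₀, hk₀⟩ := eventually_atTop.1 <| (eventually_ge_atTop 4).and <|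
    ((tendsto_log_atTop.comp tendsto_natCast_atTop_atTop).eventually_ge_atTop 2).and <|
    eventually_two_mul_log_add_one_sq_le.and <|
    (eventually_pow_mul_two_zpow_one_sub_le 4 (by positivity : 0 < ε / 16)).and
      (eventually_pow_mul_two_zpow_one_sub_le 4 (by norm_num : (0 : ℝ) < 1 / 4))
  refine ⟨k₀, fun k hk r hr hrle α ⟨hα0, hα1⟩ => ?_⟩
  obtain ⟨hk4, hL, hkL, hxε, hx1⟩ := hk₀ k hk
  set x : ℝ := 2 ^ (1 - (k : ℤ)) with hxdef
  have hx0 : 0 < x := zpow_pos two_pos _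
  have hxk : x ≤ k ^ 4 * x :=
    le_mul_of_one_le_left hx0.le (one_le_pow₀ (by exact_mod_cast (by omega : 1 ≤ k)))
  set δ := 4 * k ^ 4 * x ^ 2
  have hentropy := binEntropy_lt_of_le_one_tenth hk4 hL hkL hxdef le_rfl (by nlinarith)
    (sub_nonneg.2 hα1) (by linarith : 1 - α ≤ 1 / 10)
  rw [sub_sub_cancel] at hentropy
  have hrA : r * -log (1 - x) ≤ log 2 - x / 2 - δ :=
    mul_neg_log_one_sub_le hx0 (by linarith) hε.le (by nlinarith [log_two_lt_d9]) hr.le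
      (by rwa [two_pow_sub_one_eq_inv (by omega), inv_mul_eq_div] at hrle)
  have hf := fPair_pos (k := k) (by omega) (by linarith) hα1
  have hlogf : log (fPair k α) ≤ (2 - (α ^ k + (1 - α) ^ k)) * log (1 - x) :=
    (log_le_log hf (fPair_le_rpow (by omega) (by linarith) hα1)).trans_eq (log_rpow (by linarith) _)
  rw [gNAE_eq_exp hf (by linarith) hα1, gNAE_half_eq_exp (by omega), ← hxdef,
    ← binEntropy_one_sub α]
  have hs : 0 ≤ α ^ k + (1 - α) ^ k := by have := sub_nonneg.2 hα1; positivity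
  refine exp_lt_exp.2 ?_
  nlinarith [mul_le_mul_of_nonneg_left hlogf hr.le, mul_le_mul_of_nonneg_left hrA hs]
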